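/- arXiv:1901.04052 — 9 statements merged into one kernel-verified Lean document; each statement's English description precedes it below -/
import Mathlib

section
/- Let R = MvPolynomial (Fin m) ℂ, let F ∈ R, and let (A, B) with A ∈ Matrix (Fin q) (Fin p) R and B ∈ Matrix (Fin p) (Fin q) R be a matrix factorization of F, i.e. A * B = F • (1 : Matrix (Fin q) (Fin q) R) and B * A = F • (1 : Matrix (Fin p) (Fin p) R). Then every element f of the critical ideal I_crit := Ideal.span { pderiv i F | i : Fin m } acts null-homotopically on the matrix factorization: there exist matrices s ∈ Matrix (Fin q) (Fin p) R and t ∈ Matrix (Fin p) (Fin q) R such that f • (1 : Matrix (Fin p) (Fin p) R) = t * A + B * s and f • (1 : Matrix (Fin q) (Fin q) R) = s * B + A * t. -/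
/-!
For a matrix factorization `(A, B)` of `F`, the elements `f` whose multiplication is
null-homotopic form an ideal. Differentiating `B * A = F • 1` and `A * B = F • 1` by a
derivation `D` with the Leibniz rule gives `D F • 1 = D B * A + B * D A` and
`D F • 1 = D A * B + A * D B`, so `D F` is null-homotopic with homotopy `(D A, D B)`.
Taking `D = ∂ / ∂xᵢ`, the ideal contains every generator of the critical ideal.
-/

open MvPolynomial

namespace Matrix

variable {S R : Type*} [CommSemiring S] [CommSemiring R] [Algebra S R]
  {l m n : Type*} [Fintype m]

theorem map_derivation_mul (D : Derivation S R R) (M : Matrix l m R) (N : Matrix m n R) :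
    (M * N).map D = M.map D * N + M * N.map D := by
  ext i k
  simp only [map_apply, add_apply, mul_apply, map_sum, Derivation.leibniz, smul_eq_mul,
    ← Finset.sum_add_distrib]
  exact Finset.sum_congr rfl fun j _ => by ring

theorem map_derivation_smul_one [DecidableEq n] (D : Derivation S R R) (F : R) :
    (F • (1 : Matrix n n R)).map D = D F • 1 := by
  rw [smul_one_eq_diagonal, smul_one_eq_diagonal, diagonal_map (map_zero D)]

end Matrix

section NullHomotopy

variable {R : Type*} [CommSemiring R] {ι κ : Type*} [Fintype ι] [Fintype κ]
  [DecidableEq ι] [DecidableEq κ]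

def nullHomotopicIdeal (A : Matrix κ ι R) (B : Matrix ι κ R) : Ideal R where
  carrier := {f | ∃ (s : Matrix κ ι R) (t : Matrix ι κ R),
    f • (1 : Matrix ι ι R) = t * A + B * s ∧ f • (1 : Matrix κ κ R) = s * B + A * t}
  zero_mem' := ⟨0, 0, by simp, by simp⟩
  add_mem' := by
    rintro f g ⟨s, t, hι, hκ⟩ ⟨s', t', hι', hκ'⟩
    refine ⟨s + s', t + t', ?_, ?_⟩
    · rw [add_smul, hι, hι', Matrix.add_mul, Matrix.mul_add]; abel
    · rw [add_smul, hκ, hκ', Matrix.add_mul, Matrix.mul_add]; abel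
  smul_mem' := by
    rintro r f ⟨s, t, hι, hκ⟩
    refine ⟨r • s, r • t, ?_, ?_⟩
    · rw [smul_eq_mul, mul_smul, hι, smul_add, Matrix.smul_mul, Matrix.mul_smul]
    · rw [smul_eq_mul, mul_smul, hκ, smul_add, Matrix.smul_mul, Matrix.mul_smul]

theorem mem_nullHomotopicIdeal {A : Matrix κ ι R} {B : Matrix ι κ R} {f : R} :
    f ∈ nullHomotopicIdeal A B ↔ ∃ (s : Matrix κ ι R) (t : Matrix ι κ R),
      f • (1 : Matrix ι ι R) = t * A + B * s ∧ f • (1 : Matrix κ κ R) = s * B + A * t :=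
  Iff.rfl

theorem derivation_mem_nullHomotopicIdeal {S : Type*} [CommSemiring S] [Algebra S R]
    (D : Derivation S R R) {F : R} {A : Matrix κ ι R} {B : Matrix ι κ R}
    (hAB : A * B = F • (1 : Matrix κ κ R)) (hBA : B * A = F • (1 : Matrix ι ι R)) :
    D F ∈ nullHomotopicIdeal A B := by
  refine ⟨A.map D, B.map D, ?_, ?_⟩
  · rw [← Matrix.map_derivation_smul_one, ← hBA, Matrix.map_derivation_mul]
  · rw [← Matrix.map_derivation_smul_one, ← hAB, Matrix.map_derivation_mul]

end NullHomotopy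

theorem matrix_factorization_critical_ideal_null_homotopic
    (m p q : ℕ) (F : MvPolynomial (Fin m) ℂ)
    (A : Matrix (Fin q) (Fin p) (MvPolynomial (Fin m) ℂ))
    (B : Matrix (Fin p) (Fin q) (MvPolynomial (Fin m) ℂ))
    (hAB : A * B = F • (1 : Matrix (Fin q) (Fin q) (MvPolynomial (Fin m) ℂ)))
    (hBA : B * A = F • (1 : Matrix (Fin p) (Fin p) (MvPolynomial (Fin m) ℂ)))
    (f : MvPolynomial (Fin m) ℂ)
    (hf : f ∈ Ideal.span {g : MvPolynomial (Fin m) ℂ | ∃ i : Fin m, pderiv i F = g}) :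
    ∃ (s : Matrix (Fin q) (Fin p) (MvPolynomial (Fin m) ℂ))
      (t : Matrix (Fin p) (Fin q) (MvPolynomial (Fin m) ℂ)),
      f • (1 : Matrix (Fin p) (Fin p) (MvPolynomial (Fin m) ℂ)) = t * A + B * s ∧
      f • (1 : Matrix (Fin q) (Fin q) (MvPolynomial (Fin m) ℂ)) = s * B + A * t := by
  have hcrit : Ideal.span {g | ∃ i : Fin m, pderiv i F = g} ≤ nullHomotopicIdeal A B :=
    Ideal.span_le.mpr fun _ ⟨i, hi⟩ => hi ▸ derivation_mem_nullHomotopicIdeal (pderiv i) hAB hBA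
  exact mem_nullHomotopicIdeal.mp (hcrit hf)
end

section
/- Let R be a commutative ring and f : Fin m → R such that the list [f 0, …, f (m−1)] is a regular sequence in R, and let F ∈ Ideal.span (Set.range f). Let Λ := ExteriorAlgebra R (Fin m → R), let Λ^k denote the k-th exterior-degree component of Λ (the submodule (LinearMap.range (ExteriorAlgebra.ι R))^k), and let d_K : Λ →ₗ[R] Λ be the Koszul differential given by left contraction with the linear functional φ_f (x) = ∑ i, f i * x i (so d_K maps Λ^k into Λ^(k−1)). Then there exists an R-linear map δ : Λ →ₗ[R] Λ such that for every k, δ maps Λ^k into the span of the components Λ^j with j > k and j − k odd, and (d_K + δ) ∘ (d_K + δ) = F • LinearMap.id. -/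
/-!
Write `F = ∑ i, c i * f i` and take `δ` to be left multiplication by `c ∈ Λ¹`, which raises the
degree by one. In any Clifford algebra `(d + ι v * ·)² = (d v + Q v) • id`: contraction squares
to zero, `ι v * ι v = Q v`, and `d (ι v * x) = d v • x - ι v * d x`. Here `Q = 0` and `φ_f c = F`.
-/

open ExteriorAlgebra

namespace CliffordAlgebra

variable {R M : Type*} [CommRing R] [AddCommGroup M] [Module R M] {Q : QuadraticForm R M}

theorem contractLeft_add_mulLeft_ι_comp_self (d : Module.Dual R M) (v : M) :
    (contractLeft (Q := Q) d + LinearMap.mulLeft R (ι Q v)) ∘ₗ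
        (contractLeft d + LinearMap.mulLeft R (ι Q v)) = (d v + Q v) • LinearMap.id := by
  ext x
  simp only [LinearMap.comp_apply, LinearMap.add_apply, LinearMap.mulLeft_apply, map_add,
    LinearMap.smul_apply, LinearMap.id_apply, contractLeft_contractLeft, contractLeft_ι_mul,
    ← mul_assoc, ι_sq_scalar, Algebra.algebraMap_eq_smul_one, smul_mul_assoc, one_mul, add_smul]
  abel

end CliffordAlgebra

namespace ExteriorAlgebra

variable {R M : Type*} [CommRing R] [AddCommGroup M] [Module R M]

theorem ι_mul_mem_range_pow_succ (v : M) {k : ℕ} {x : ExteriorAlgebra R M}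
    (hx : x ∈ LinearMap.range (ι R) ^ k) : ι R v * x ∈ LinearMap.range (ι R) ^ (k + 1) := by
  rw [pow_succ']
  exact Submodule.mul_mem_mul (LinearMap.mem_range_self _ _) hx

end ExteriorAlgebra

theorem LinearMap.sum_smul_proj_apply {R ι : Type*} [CommSemiring R] [Fintype ι]
    (f c : ι → R) : (∑ i, f i • (LinearMap.proj i : (ι → R) →ₗ[R] R)) c = ∑ i, c i * f i := by
  simp [mul_comm]

theorem koszul_complex_extends_to_matrix_factorization_general
    {R : Type*} [CommRing R] (m : ℕ) (f : Fin m → R)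
    (F : R) (hF : F ∈ Ideal.span (Set.range f)) :
    ∃ δ : ExteriorAlgebra R (Fin m → R) →ₗ[R] ExteriorAlgebra R (Fin m → R),
      (∀ (k : ℕ) (x : ExteriorAlgebra R (Fin m → R)),
          x ∈ (LinearMap.range (ι R : (Fin m → R) →ₗ[R] ExteriorAlgebra R (Fin m → R))) ^ k →
          δ x ∈ ⨆ (j : ℕ) (_ : k < j ∧ Odd (j - k)),
            (LinearMap.range (ι R : (Fin m → R) →ₗ[R] ExteriorAlgebra R (Fin m → R))) ^ j) ∧
      (CliffordAlgebra.contractLeft (∑ i, f i • (LinearMap.proj i : (Fin m → R) →ₗ[R] R)) + δ) ∘ₗ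
        (CliffordAlgebra.contractLeft (∑ i, f i • (LinearMap.proj i : (Fin m → R) →ₗ[R] R)) + δ)
        = F • LinearMap.id := by
  obtain ⟨c, hc⟩ := Ideal.mem_span_range_iff_exists_fun.mp hF
  refine ⟨LinearMap.mulLeft R (ι R c), fun k x hx => ?_, ?_⟩
  · have hodd : k < k + 1 ∧ Odd (k + 1 - k) := ⟨k.lt_succ_self, by simp⟩
    exact Submodule.mem_iSup_of_mem (k + 1) <|
      Submodule.mem_iSup_of_mem hodd (ι_mul_mem_range_pow_succ c hx)
  · rw [CliffordAlgebra.contractLeft_add_mulLeft_ι_comp_self,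
      LinearMap.sum_smul_proj_apply, hc, zero_apply, add_zero]

theorem koszul_complex_extends_to_matrix_factorization
    {R : Type*} [CommRing R] (m : ℕ) (f : Fin m → R)
    (hreg : RingTheory.Sequence.IsRegular R (List.ofFn f))
    (F : R) (hF : F ∈ Ideal.span (Set.range f)) :
    ∃ δ : ExteriorAlgebra R (Fin m → R) →ₗ[R] ExteriorAlgebra R (Fin m → R),
      (∀ (k : ℕ) (x : ExteriorAlgebra R (Fin m → R)),
          x ∈ (LinearMap.range (ι R : (Fin m → R) →ₗ[R] ExteriorAlgebra R (Fin m → R))) ^ k →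
          δ x ∈ ⨆ (j : ℕ) (_ : k < j ∧ Odd (j - k)),
            (LinearMap.range (ι R : (Fin m → R) →ₗ[R] ExteriorAlgebra R (Fin m → R))) ^ j) ∧
      (CliffordAlgebra.contractLeft (∑ i, f i • (LinearMap.proj i : (Fin m → R) →ₗ[R] R)) + δ) ∘ₗ
        (CliffordAlgebra.contractLeft (∑ i, f i • (LinearMap.proj i : (Fin m → R) →ₗ[R] R)) + δ)
        = F • LinearMap.id :=
  koszul_complex_extends_to_matrix_factorization_general m f F hF
end

section
/- Let R be a commutative ring, F₁, F₂ ∈ R, and let (A₁, B₁) with A₁ ∈ Matrix (Fin q₁) (Fin p₁) R, B₁ ∈ Matrix (Fin p₁) (Fin q₁) R be a matrix factorization of F₁, and (A₂, B₂) with A₂ ∈ Matrix (Fin q₂) (Fin p₂) R, B₂ ∈ Matrix (Fin p₂) (Fin q₂) R be a matrix factorization of F₂. Define the block matrices E := fromBlocks (A₁ ⊗ₖ 1) (−(1 ⊗ₖ B₂)) (1 ⊗ₖ A₂) (B₁ ⊗ₖ 1), a matrix with rows indexed by (Fin q₁ × Fin p₂) ⊕ (Fin p₁ × Fin q₂) and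 columns by (Fin p₁ × Fin p₂) ⊕ (Fin q₁ × Fin q₂), and O := fromBlocks (B₁ ⊗ₖ 1) (1 ⊗ₖ B₂) (−(1 ⊗ₖ A₂)) (A₁ ⊗ₖ 1) with the transposed index types, where ⊗ₖ denotes the Kronecker product. Then O * E = (F₁ + F₂) • 1 and E * O = (F₁ + F₂) • 1; i.e. (E, O) is a matrix factorization of F₁ + F₂ (the tensor product of the two matrix factorizations). -/
open Matrix Kronecker

namespace Matrix

section Kronecker

variable {R : Type*} [CommSemiring R] {l m n k : Type*}

theorem kronecker_one_mul_one_kronecker [Fintype n] [Fintype l] [DecidableEq n] [DecidableEq l]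
    (A : Matrix m n R) (B : Matrix l k R) :
    (A ⊗ₖ (1 : Matrix l l R)) * ((1 : Matrix n n R) ⊗ₖ B) = A ⊗ₖ B := by
  rw [← mul_kronecker_mul, Matrix.mul_one, Matrix.one_mul]

theorem one_kronecker_mul_kronecker_one [Fintype m] [Fintype k] [DecidableEq m] [DecidableEq k]
    (A : Matrix m n R) (B : Matrix l k R) :
    ((1 : Matrix m m R) ⊗ₖ B) * (A ⊗ₖ (1 : Matrix k k R)) = A ⊗ₖ B := by
  rw [← mul_kronecker_mul, Matrix.mul_one, Matrix.one_mul]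

theorem kronecker_one_mul_kronecker_one [Fintype n] [Fintype l] [DecidableEq l]
    (A : Matrix m n R) (B : Matrix n k R) :
    (A ⊗ₖ (1 : Matrix l l R)) * (B ⊗ₖ (1 : Matrix l l R)) = (A * B) ⊗ₖ (1 : Matrix l l R) := by
  rw [← mul_kronecker_mul, Matrix.mul_one]

theorem one_kronecker_mul_one_kronecker [Fintype n] [Fintype l] [DecidableEq l]
    (A : Matrix m n R) (B : Matrix n k R) :
    ((1 : Matrix l l R) ⊗ₖ A) * ((1 : Matrix l l R) ⊗ₖ B) = (1 : Matrix l l R) ⊗ₖ (A * B) := by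
  rw [← mul_kronecker_mul, Matrix.mul_one]

theorem smul_one_kronecker_one [DecidableEq m] [DecidableEq l] (F : R) :
    (F • (1 : Matrix m m R)) ⊗ₖ (1 : Matrix l l R) = F • 1 := by
  rw [smul_kronecker, one_kronecker_one]

theorem one_kronecker_smul_one [DecidableEq m] [DecidableEq l] (F : R) :
    (1 : Matrix l l R) ⊗ₖ (F • (1 : Matrix m m R)) = F • 1 := by
  rw [kronecker_smul, one_kronecker_one]

theorem fromBlocks_smul_one_add_smul_one [DecidableEq m] [DecidableEq n] (F₁ F₂ : R) :
    fromBlocks (F₁ • 1 + F₂ • 1) 0 0 (F₁ • 1 + F₂ • 1) =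
      (F₁ + F₂) • (1 : Matrix (m ⊕ n) (m ⊕ n) R) := by
  rw [← fromBlocks_one, fromBlocks_smul]
  simp only [smul_zero, add_smul]

end Kronecker

section Factorization

variable {R : Type*} [CommRing R] {l m n k : Type*}
  [Fintype l] [Fintype m] [Fintype n] [Fintype k]
  [DecidableEq l] [DecidableEq m] [DecidableEq n] [DecidableEq k]

def IsMatrixFactorization (F : R) (A : Matrix m n R) (B : Matrix n m R) : Prop :=
  A * B = F • 1 ∧ B * A = F • 1

theorem IsMatrixFactorization.symm {F : R} {A : Matrix m n R} {B : Matrix n m R}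
    (h : IsMatrixFactorization F A B) : IsMatrixFactorization F B A :=
  And.symm h

/-- The cross terms cancel: `A ⊗ₖ 1` and `1 ⊗ₖ B` commute, and the Koszul signs give them
opposite signs. -/
theorem IsMatrixFactorization.tensor {F₁ F₂ : R}
    {A₁ : Matrix m n R} {B₁ : Matrix n m R} {A₂ : Matrix l k R} {B₂ : Matrix k l R}
    (h₁ : IsMatrixFactorization F₁ A₁ B₁) (h₂ : IsMatrixFactorization F₂ A₂ B₂) :
    IsMatrixFactorization (F₁ + F₂)
      (fromBlocks (A₁ ⊗ₖ 1) (-(1 ⊗ₖ B₂)) (1 ⊗ₖ A₂) (B₁ ⊗ₖ 1))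
      (fromBlocks (B₁ ⊗ₖ 1) (1 ⊗ₖ B₂) (-(1 ⊗ₖ A₂)) (A₁ ⊗ₖ 1)) := by
  constructor <;>
  · rw [fromBlocks_multiply, ← fromBlocks_smul_one_add_smul_one]
    simp only [Matrix.mul_neg, Matrix.neg_mul, neg_neg, kronecker_one_mul_one_kronecker,
      one_kronecker_mul_kronecker_one, kronecker_one_mul_kronecker_one,
      one_kronecker_mul_one_kronecker, h₁.1, h₁.2, h₂.1, h₂.2, smul_one_kronecker_one,
      one_kronecker_smul_one, add_neg_cancel, neg_add_cancel, add_comm (F₂ • _)]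

end Factorization

end Matrix

theorem tensor_product_of_matrix_factorizations
    {R : Type*} [CommRing R] (F₁ F₂ : R) (p₁ q₁ p₂ q₂ : ℕ)
    (A₁ : Matrix (Fin q₁) (Fin p₁) R) (B₁ : Matrix (Fin p₁) (Fin q₁) R)
    (A₂ : Matrix (Fin q₂) (Fin p₂) R) (B₂ : Matrix (Fin p₂) (Fin q₂) R)
    (h₁ : A₁ * B₁ = F₁ • (1 : Matrix (Fin q₁) (Fin q₁) R))
    (h₁' : B₁ * A₁ = F₁ • (1 : Matrix (Fin p₁) (Fin p₁) R))
    (h₂ : A₂ * B₂ = F₂ • (1 : Matrix (Fin q₂) (Fin q₂) R))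
    (h₂' : B₂ * A₂ = F₂ • (1 : Matrix (Fin p₂) (Fin p₂) R))
    (E : Matrix ((Fin q₁ × Fin p₂) ⊕ (Fin p₁ × Fin q₂)) ((Fin p₁ × Fin p₂) ⊕ (Fin q₁ × Fin q₂)) R)
    (O : Matrix ((Fin p₁ × Fin p₂) ⊕ (Fin q₁ × Fin q₂)) ((Fin q₁ × Fin p₂) ⊕ (Fin p₁ × Fin q₂)) R)
    (hE : E = fromBlocks (A₁ ⊗ₖ 1) (-(1 ⊗ₖ B₂)) (1 ⊗ₖ A₂) (B₁ ⊗ₖ 1))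
    (hO : O = fromBlocks (B₁ ⊗ₖ 1) (1 ⊗ₖ B₂) (-(1 ⊗ₖ A₂)) (A₁ ⊗ₖ 1)) :
    O * E = (F₁ + F₂) • (1 : Matrix ((Fin p₁ × Fin p₂) ⊕ (Fin q₁ × Fin q₂))
        ((Fin p₁ × Fin p₂) ⊕ (Fin q₁ × Fin q₂)) R) ∧
    E * O = (F₁ + F₂) • (1 : Matrix ((Fin q₁ × Fin p₂) ⊕ (Fin p₁ × Fin q₂))
        ((Fin q₁ × Fin p₂) ⊕ (Fin p₁ × Fin q₂)) R) := by
  subst hE hO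
  exact (IsMatrixFactorization.tensor ⟨h₁, h₁'⟩ ⟨h₂, h₂'⟩).symm
end

section
/- Let R be a commutative ring, and let X := !![x₁₁, x₁₂; 0, x₂₂] be an upper triangular 2×2 matrix, Y := !![0, y; 0, 0] a strictly upper triangular 2×2 matrix, and g an arbitrary 2×2 matrix over R with adjugate g.adjugate. Then the potential factors as a product of three terms: trace (X * g * Y * g.adjugate) = − y * (g 1 0) * ((g 0 0) * (x₁₁ − x₂₂) + (g 1 0) * x₁₂). (Equivalently, for invertible g, det(g) · Tr(X · Ad_g(Y)) = − y₁₂ · g₂₁ · (g₁₁(x₁₁ − x₂₂) + g₂₁ x₁₂), the factorization of the potential W̄(X, g, Y) = Tr(X Ad_g Y) for n = 2 underlying the Koszul matrix factorization C̄₊ of the elementary positive braid.) -/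
open Matrix

/-! `Y = y E₁₂` has rank one, so `g Y g.adjugate` is the rank-one matrix `(y • g e₁) ⊗ (e₂ᵀ g.adjugate)`,
and the trace of `X` times it is the bilinear form `(e₂ᵀ g.adjugate) X (y • g e₁)`; the second row of
`g.adjugate` is `(-g₂₁, g₁₁)`, which produces the common factor `g₂₁`. -/

theorem Matrix.trace_mul_vecMulVec_mul {l m n R : Type*} [Fintype l] [Fintype m] [Fintype n]
    [NonUnitalSemiring R] (A : Matrix l m R) (u : m → R) (v : n → R) (B : Matrix n l R) :
    trace (A * vecMulVec u v * B) = (A *ᵥ u) ⬝ᵥ (v ᵥ* B) := by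
  rw [mul_vecMulVec, vecMulVec_mul, trace_vecMulVec]

theorem Matrix.fin_two_strictUpper_eq_vecMulVec {R : Type*} [MulZeroOneClass R] (y : R) :
    (!![0, y; 0, 0] : Matrix (Fin 2) (Fin 2) R) = vecMulVec ![y, 0] ![0, 1] := by
  ext i j
  fin_cases i <;> fin_cases j <;> simp [vecMulVec_apply]

theorem potential_factorization_n_eq_two
    {R : Type*} [CommRing R] (x₁₁ x₁₂ x₂₂ y : R)
    (g : Matrix (Fin 2) (Fin 2) R) :
    trace ((!![x₁₁, x₁₂; 0, x₂₂] : Matrix (Fin 2) (Fin 2) R) * g *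
        (!![0, y; 0, 0] : Matrix (Fin 2) (Fin 2) R) * g.adjugate)
      = -(y * g 1 0 * (g 0 0 * (x₁₁ - x₂₂) + g 1 0 * x₁₂)) := by
  rw [fin_two_strictUpper_eq_vecMulVec, trace_mul_vecMulVec_mul, adjugate_fin_two]
  simp only [mulVec, vecMul, dotProduct, Fin.sum_univ_two, cons_mul, empty_mul, of_apply,
    Equiv.symm_apply_apply, cons_val', cons_val_zero, cons_val_one, cons_val_fin_one]
  ring
end

section
/- Let K be a field, X := !![x₁₁, x₁₂; 0, x₂₂] an upper triangular 2×2 matrix over K, Y := !![0, y; 0, 0] a strictly upper triangular 2×2 matrix, and v⁰ := ![0, 1] ∈ (Fin 2 → K). Then the following are equivalent: (i) every K-subspace W ⊆ (Fin 2 → K) with v⁰ ∈ W, X.mulVec w ∈ W for all w ∈ W, and Y.mulVec w ∈ W for all w ∈ W, equals ⊤ (i.e. v⁰ is a cyclic vector for the pair (X, Y)); (ii) x₁₂ ≠ 0 ∨ y ≠ 0. -/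
/-!
If `A 0 1 = 0` for every matrix `A` of the family, then the line `{w | w 0 = 0}` through
`e₁ = ![0, 1]` is a proper invariant subspace. Conversely, if `A 0 1 ≠ 0`, then
`A e₁ = A 0 1 • e₀ + A 1 1 • e₁` shows that every invariant subspace containing `e₁` also
contains `e₀`, hence is everything.
-/

open Matrix

section

variable {R : Type*}

def IsCyclicVector [Semiring R] {n : Type*} [Fintype n] (S : Set (Matrix n n R)) (v : n → R) :
    Prop :=
  ∀ W : Submodule R (n → R), v ∈ W → (∀ A ∈ S, ∀ w ∈ W, A *ᵥ w ∈ W) → W = ⊤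

theorem Submodule.eq_top_of_forall_single_one_mem [Semiring R] {n : Type*} [Finite n]
    [DecidableEq n] {W : Submodule R (n → R)} (h : ∀ i, Pi.single i 1 ∈ W) : W = ⊤ := by
  rw [eq_top_iff, ← (Pi.basisFun R n).span_eq, Submodule.span_le]
  rintro _ ⟨i, rfl⟩
  simpa using h i

theorem Matrix.mulVec_apply_eq_zero_of_row_offDiag_eq_zero [NonUnitalNonAssocSemiring R]
    {n : Type*} [Fintype n] (A : Matrix n n R) {w : n → R} {i : n} (hA : ∀ j ≠ i, A i j = 0)
    (hw : w i = 0) : (A *ᵥ w) i = 0 :=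
  Finset.sum_eq_zero fun j _ => by
    rcases eq_or_ne j i with rfl | hj
    · simp [hw]
    · simp [hA j hj]

theorem Matrix.mulVec_single_one_fin_two [NonAssocSemiring R] (A : Matrix (Fin 2) (Fin 2) R) :
    A *ᵥ Pi.single 1 1 = A 0 1 • Pi.single 0 1 + A 1 1 • Pi.single 1 1 := by
  ext i; fin_cases i <;> simp

theorem single_zero_mem_of_mulVec_single_one_mem [DivisionRing R] {A : Matrix (Fin 2) (Fin 2) R}
    {W : Submodule R (Fin 2 → R)} (hA : A 0 1 ≠ 0) (h₁ : Pi.single 1 1 ∈ W)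
    (hA₁ : A *ᵥ Pi.single 1 1 ∈ W) : Pi.single 0 1 ∈ W := by
  rwa [mulVec_single_one_fin_two, Submodule.add_mem_iff_left _ (W.smul_mem _ h₁),
    Submodule.smul_mem_iff _ hA] at hA₁

theorem isCyclicVector_single_one_iff [DivisionRing R] (S : Set (Matrix (Fin 2) (Fin 2) R)) :
    IsCyclicVector S (Pi.single 1 1) ↔ ∃ A ∈ S, A 0 1 ≠ 0 := by
  constructor
  · intro hcyc
    by_contra! hS
    let W := LinearMap.ker (LinearMap.proj 0 : (Fin 2 → R) →ₗ[R] R)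
    have hW : W = ⊤ := hcyc W (by simp [W]) fun A hA _ hw =>
      A.mulVec_apply_eq_zero_of_row_offDiag_eq_zero
        (fun j hj => Fin.eq_one_of_ne_zero j hj ▸ hS A hA) hw
    have h₀ : Pi.single 0 1 ∈ W := hW ▸ Submodule.mem_top
    simp [W] at h₀
  · rintro ⟨A, hAS, hA⟩ W h₁ hW
    have h₀ := single_zero_mem_of_mulVec_single_one_mem hA h₁ (hW A hAS _ h₁)
    exact Submodule.eq_top_of_forall_single_one_mem fun i => by fin_cases i <;> assumption

end

theorem cyclicity_criterion_for_FHilb_two_free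
    {K : Type*} [Field K] (x₁₁ x₁₂ x₂₂ y : K) :
    (∀ W : Submodule K (Fin 2 → K),
        (![0, 1] : Fin 2 → K) ∈ W →
        (∀ w ∈ W, (!![x₁₁, x₁₂; 0, x₂₂] : Matrix (Fin 2) (Fin 2) K).mulVec w ∈ W) →
        (∀ w ∈ W, (!![0, y; 0, 0] : Matrix (Fin 2) (Fin 2) K).mulVec w ∈ W) →
        W = ⊤)
      ↔ (x₁₂ ≠ 0 ∨ y ≠ 0) := by
  have hv : (![0, 1] : Fin 2 → K) = Pi.single 1 1 := by
    ext i; fin_cases i <;> rfl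
  have h := isCyclicVector_single_one_iff {!![x₁₁, x₁₂; 0, x₂₂], !![0, y; 0, 0]}
  simp only [IsCyclicVector, Set.mem_insert_iff, Set.mem_singleton_iff, forall_eq_or_imp,
    forall_eq, exists_eq_or_imp, exists_eq_left] at h
  simpa [hv] using h
end

section
/- Let P := MvPolynomial (Fin 2 × Fin 2) ℂ with variables a i j (the entries of a generic 2×2 matrix), let d := a 0 0 * a 1 1 − a 0 1 * a 1 0 be the determinant, and let A := Localization.Away d be the localization of P at d (the coordinate ring of GL₂). Let δ : Derivation ℂ A A be a ℂ-linear derivation satisfying δ(a 0 0) = 0, δ(a 1 0) = 0, δ(a 0 1) = −a 0 0, and δ(a 1 1) = −a 1 0 (where a i j and d denote their images in A). Then the kernel of δ equals the ℂ-subalgebra Algebra.adjoin ℂ {a 0 0, a 1 0, d, d⁻¹} of A generated by the first-column entries, the determinant, and its inverse: for x ∈ A, δ x = 0 if and only if x ∈ Algebra.adjoin ℂ {a 0 0, a 1 0, d, d⁻¹}. -/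
/-!
On the chart `a₀₀ ≠ 0` of `GL₂` the functions `a₀₀, a₁₀, det, a₀₁` are free coordinates
(`a₁₁ = (det + a₀₁ a₁₀) / a₀₀`) in which `δ = -a₀₀ ∂/∂a₀₁`. Hence a polynomial `P` killed by `δ`
satisfies `a₀₀ⁿ P ∈ ℂ[a₀₀, a₁₀, det]` for some `n`, and by the row-swap symmetry also
`a₁₀ᵐ P ∈ ℂ[a₀₀, a₁₀, det]`. Since `a₀₀, a₁₀, det` are algebraically independent and `a₀₀` is a
prime not dividing `a₁₀`, this forces `P ∈ ℂ[a₀₀, a₁₀, det]`. An element of the localization is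
`P / detⁿ` with `δ P = 0`, which gives the theorem.
-/

open MvPolynomial

/-- The determinant of the generic `2 × 2` matrix with entries `a i j = X (i, j)`. -/
noncomputable def genDet : MvPolynomial (Fin 2 × Fin 2) ℂ :=
  X (0, 0) * X (1, 1) - X (0, 1) * X (1, 0)

theorem MvPolynomial.algHom_apply_derivation {σ R S : Type*} [CommSemiring R] [CommSemiring S]
    [Algebra R S] (F : MvPolynomial σ R →ₐ[R] S)
    (D₁ : Derivation R (MvPolynomial σ R) (MvPolynomial σ R)) (D₂ : Derivation R S S)
    (h : ∀ i, F (D₁ (X i)) = D₂ (F (X i))) (p : MvPolynomial σ R) :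
    F (D₁ p) = D₂ (F p) := by
  induction p using MvPolynomial.induction_on with
  | C a => simp only [map_zero, ← algebraMap_eq, AlgHom.commutes, Derivation.map_algebraMap]
  | add p q hp hq => simp only [map_add, hp, hq]
  | mul_X p i hp => simp only [Derivation.leibniz, map_add, map_mul, smul_eq_mul, hp, h]

theorem mem_range_of_pow_mul_mem_range_of_not_dvd {S R F : Type*} [CommSemiring S]
    [CommSemiring R] [IsDomain R] [FunLike F S R] [RingHomClass F S R] {g : F}
    (hg : Function.Injective g) {p q : S} (hp : Prime p) (hpq : ¬p ∣ q) {x : R} {m n : ℕ}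
    (hm : g p ^ m * x ∈ Set.range g) (hn : g q ^ n * x ∈ Set.range g) : x ∈ Set.range g := by
  obtain ⟨b, hb⟩ := hn
  induction m with
  | zero => simpa using hm
  | succ m ih =>
    obtain ⟨a, ha⟩ := hm
    have hqa : q ^ n * a = p ^ (m + 1) * b := hg <| by
      rw [map_mul, map_mul, map_pow, map_pow, ha, hb]; ring
    obtain ⟨a', rfl⟩ : p ∣ a :=
      (hp.dvd_or_dvd ⟨p ^ m * b, by rw [hqa, pow_succ']; ring⟩).resolve_left
        fun h => hpq (hp.dvd_of_dvd_pow h)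
    refine ih ⟨a', mul_left_cancel₀ ((map_ne_zero_iff g hg).2 hp.ne_zero) ?_⟩
    rw [← map_mul, ha]; ring

theorem IsLocalization.Away.eq_algebraMap_mul_invSelf_pow {R S : Type*} [CommSemiring R]
    [CommSemiring S] [Algebra R S] (r : R) [IsLocalization.Away r S] {x : S} {a : R} {n : ℕ}
    (h : x * algebraMap R S r ^ n = algebraMap R S a) :
    x = algebraMap R S a * IsLocalization.Away.invSelf r ^ n := by
  rw [← h, mul_assoc, ← mul_pow, IsLocalization.Away.mul_invSelf, one_pow, mul_one]

namespace GL2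

abbrev MatPoly : Type := MvPolynomial (Fin 2 × Fin 2) ℂ

abbrev InvariantsPoly : Type := MvPolynomial (Fin 3) ℂ

noncomputable def unipotentDerivation : Derivation ℂ MatPoly MatPoly :=
  mkDerivation ℂ fun p => if p.2 = 1 then -X (p.1, 0) else 0

@[simp]
theorem unipotentDerivation_X (i j : Fin 2) :
    unipotentDerivation (X (i, j)) = if j = 1 then -X (i, 0) else 0 :=
  mkDerivation_X _ _ _

theorem unipotentDerivation_genDet : unipotentDerivation genDet = 0 := by
  simp only [genDet, map_sub, Derivation.leibniz, unipotentDerivation_X, ↓reduceIte, zero_ne_one,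
    smul_eq_mul]
  ring

theorem map_unipotentDerivation {B : Type*} [CommRing B] [Algebra ℂ B] (f : MatPoly →ₐ[ℂ] B)
    (D : Derivation ℂ B B) (h00 : D (f (X (0, 0))) = 0) (h10 : D (f (X (1, 0))) = 0)
    (h01 : D (f (X (0, 1))) = -f (X (0, 0))) (h11 : D (f (X (1, 1))) = -f (X (1, 0)))
    (P : MatPoly) : f (unipotentDerivation P) = D (f P) := by
  refine MvPolynomial.algHom_apply_derivation f unipotentDerivation D ?_ P
  rintro ⟨i, j⟩
  fin_cases i <;> fin_cases j <;> simp [h00, h10, h01, h11]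

noncomputable def invariantsHom : InvariantsPoly →ₐ[ℂ] MatPoly :=
  aeval ![X (0, 0), X (1, 0), genDet]

@[simp] theorem invariantsHom_X_zero : invariantsHom (X 0) = X (0, 0) := aeval_X _ _
@[simp] theorem invariantsHom_X_one : invariantsHom (X 1) = X (1, 0) := aeval_X _ _
@[simp] theorem invariantsHom_X_two : invariantsHom (X 2) = genDet := aeval_X _ _

theorem map_invariantsHom_mem_adjoin {B : Type*} [CommRing B] [Algebra ℂ B]
    (f : MatPoly →ₐ[ℂ] B) (Q : InvariantsPoly) :
    f (invariantsHom Q) ∈ Algebra.adjoin ℂ {f (X (0, 0)), f (X (1, 0)), f genDet} := by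
  rw [invariantsHom, comp_aeval_apply]
  have hsub : Set.range (fun i => f (![X (0, 0), X (1, 0), genDet] i)) ⊆
      {f (X (0, 0)), f (X (1, 0)), f genDet} := by
    rintro _ ⟨i, rfl⟩
    fin_cases i <;> simp
  exact Algebra.adjoin_mono hsub (by rw [Algebra.adjoin_range_eq_range_aeval]; exact ⟨Q, rfl⟩)

abbrev SliceBase : Type := Localization.Away (X 0 : InvariantsPoly)

instance : IsDomain SliceBase :=
  IsLocalization.isDomain_localization
    (powers_le_nonZeroDivisors_of_noZeroDivisors (X_ne_zero (0 : Fin 3)))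

instance : CharZero SliceBase :=
  charZero_of_injective_algebraMap (algebraMap ℂ SliceBase).injective

noncomputable def baseX (i : Fin 3) : SliceBase := algebraMap InvariantsPoly SliceBase (X i)

noncomputable def baseXInv : SliceBase := IsLocalization.Away.invSelf (X 0 : InvariantsPoly)

theorem baseX_zero_mul_baseXInv : baseX 0 * baseXInv = 1 := IsLocalization.Away.mul_invSelf _

theorem C_baseX_zero_mul_C_baseXInv :
    Polynomial.C (baseX 0) * Polynomial.C baseXInv = 1 := by
  rw [← map_mul, baseX_zero_mul_baseXInv, map_one]

/-- The chart `a₀₀ ≠ 0` of `GL₂` in the coordinates `a₀₀, a₁₀, det` (the base) and `a₀₁` (the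
polynomial variable): it sends `a₁₁` to `(det + a₀₁ a₁₀) / a₀₀`. -/
noncomputable def slice : MatPoly →ₐ[ℂ] Polynomial SliceBase :=
  aeval fun p => ![![Polynomial.C (baseX 0), Polynomial.X],
    ![Polynomial.C (baseX 1),
      Polynomial.C baseXInv * (Polynomial.C (baseX 2) + Polynomial.C (baseX 1) * Polynomial.X)]]
    p.1 p.2

@[simp] theorem slice_X00 : slice (X (0, 0)) = Polynomial.C (baseX 0) := aeval_X _ _
@[simp] theorem slice_X01 : slice (X (0, 1)) = Polynomial.X := aeval_X _ _
@[simp] theorem slice_X10 : slice (X (1, 0)) = Polynomial.C (baseX 1) := aeval_X _ _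
@[simp] theorem slice_X11 : slice (X (1, 1)) =
    Polynomial.C baseXInv * (Polynomial.C (baseX 2) + Polynomial.C (baseX 1) * Polynomial.X) :=
  aeval_X _ _

theorem slice_genDet : slice genDet = Polynomial.C (baseX 2) := by
  rw [genDet, map_sub, map_mul, map_mul, slice_X00, slice_X01, slice_X10, slice_X11]
  linear_combination
    (Polynomial.C (baseX 2) + Polynomial.C (baseX 1) * Polynomial.X) * C_baseX_zero_mul_C_baseXInv

theorem slice_invariantsHom (Q : InvariantsPoly) :
    slice (invariantsHom Q) = Polynomial.C (algebraMap InvariantsPoly SliceBase Q) := by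
  change (slice.comp invariantsHom) Q =
    (Polynomial.CAlgHom.comp (IsScalarTower.toAlgHom ℂ InvariantsPoly SliceBase)) Q
  congr 1
  apply MvPolynomial.algHom_ext
  intro i
  fin_cases i <;> simp [baseX, slice_genDet]

theorem invariantsHom_injective : Function.Injective invariantsHom := by
  intro P Q h
  apply IsLocalization.injective SliceBase
    (powers_le_nonZeroDivisors_of_noZeroDivisors (X_ne_zero (0 : Fin 3)))
  simpa [slice_invariantsHom] using congrArg slice h

theorem genDet_ne_zero : genDet ≠ 0 :=
  invariantsHom_X_two ▸ (map_ne_zero_iff _ invariantsHom_injective).2 (X_ne_zero 2)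

abbrev Frac : Type := FractionRing MatPoly

noncomputable def baseToFrac : SliceBase →+* Frac :=
  IsLocalization.Away.lift (X 0) (g := (algebraMap MatPoly Frac).comp invariantsHom.toRingHom)
    (by simp)

theorem baseToFrac_baseX (i : Fin 3) :
    baseToFrac (baseX i) = algebraMap MatPoly Frac (invariantsHom (X i)) :=
  IsLocalization.Away.lift_eq _ _ _

theorem baseToFrac_baseXInv : baseToFrac baseXInv = (algebraMap MatPoly Frac (X (0, 0)))⁻¹ := by
  refine (inv_eq_of_mul_eq_one_right ?_).symm
  simpa [baseToFrac_baseX] using congrArg baseToFrac baseX_zero_mul_baseXInv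

noncomputable def sliceToFrac : Polynomial SliceBase →+* Frac :=
  Polynomial.eval₂RingHom baseToFrac (algebraMap MatPoly Frac (X (0, 1)))

theorem sliceToFrac_slice (P : MatPoly) : sliceToFrac (slice P) = algebraMap MatPoly Frac P := by
  have hX11 : sliceToFrac (slice (X (1, 1))) = algebraMap MatPoly Frac (X (1, 1)) := by
    simp only [sliceToFrac, slice_X11, Polynomial.coe_eval₂RingHom, Polynomial.eval₂_mul,
      Polynomial.eval₂_add, Polynomial.eval₂_C, Polynomial.eval₂_X, baseToFrac_baseX,
      baseToFrac_baseXInv, invariantsHom_X_one, invariantsHom_X_two]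
    rw [inv_mul_eq_iff_eq_mul₀ (by simp), genDet]
    simp only [map_sub, map_mul]
    ring
  change (sliceToFrac.comp slice.toRingHom) P = _
  congr 1
  apply MvPolynomial.ringHom_ext
  · intro r
    simp [sliceToFrac, IsScalarTower.algebraMap_apply ℂ InvariantsPoly SliceBase, baseToFrac]
  · rintro ⟨i, j⟩
    fin_cases i <;> fin_cases j
    · simp [sliceToFrac, baseToFrac_baseX]
    · simp [sliceToFrac]
    · simp [sliceToFrac, baseToFrac_baseX]
    · exact hX11

theorem slice_injective : Function.Injective slice := fun P Q h =>
  IsFractionRing.injective MatPoly Frac <| by rw [← sliceToFrac_slice, h, sliceToFrac_slice]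

noncomputable def sliceDerivation : Derivation ℂ (Polynomial SliceBase) (Polynomial SliceBase) :=
  -Polynomial.C (baseX 0) • (Polynomial.derivative' (R := SliceBase)).restrictScalars ℂ

theorem sliceDerivation_apply (f : Polynomial SliceBase) :
    sliceDerivation f = -Polynomial.C (baseX 0) * Polynomial.derivative f :=
  rfl

theorem slice_unipotentDerivation (P : MatPoly) :
    slice (unipotentDerivation P) = -Polynomial.C (baseX 0) * Polynomial.derivative (slice P) := by
  rw [← sliceDerivation_apply]
  refine map_unipotentDerivation slice sliceDerivation ?_ ?_ ?_ ?_ P <;>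
    simp only [sliceDerivation_apply, slice_X00, slice_X01, slice_X10, slice_X11,
      Polynomial.derivative_C, Polynomial.derivative_X, Polynomial.derivative_C_mul,
      Polynomial.derivative_add, mul_zero, mul_one, zero_add]
  linear_combination -Polynomial.C (baseX 1) * C_baseX_zero_mul_C_baseXInv

theorem exists_X00_pow_mul_mem_range_invariantsHom {P : MatPoly}
    (hP : unipotentDerivation P = 0) : ∃ n : ℕ, X (0, 0) ^ n * P ∈ Set.range invariantsHom := by
  have hconst : Polynomial.derivative (slice P) = 0 := by
    have hC : Polynomial.C (baseX 0) ≠ 0 :=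
      Polynomial.C_ne_zero.2 (left_ne_zero_of_mul_eq_one baseX_zero_mul_baseXInv)
    simpa [hP, hC] using slice_unipotentDerivation P
  obtain ⟨n, Q, hQ⟩ := IsLocalization.Away.surj (X 0 : InvariantsPoly) ((slice P).coeff 0)
  refine ⟨n, Q, slice_injective ?_⟩
  rw [map_mul, map_pow, slice_invariantsHom, Polynomial.eq_C_of_derivative_eq_zero hconst, ← hQ,
    slice_X00, map_mul, map_pow, mul_comm]
  rfl

noncomputable def rowSwap : MatPoly →ₐ[ℂ] MatPoly := rename (Prod.map (Equiv.swap 0 1) id)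

@[simp]
theorem rowSwap_X (i j : Fin 2) : rowSwap (X (i, j)) = X (Equiv.swap 0 1 i, j) := rename_X _ _

theorem rowSwap_rowSwap (P : MatPoly) : rowSwap (rowSwap P) = P := by
  change (rowSwap.comp rowSwap) P = AlgHom.id ℂ MatPoly P
  congr 1
  apply MvPolynomial.algHom_ext
  rintro ⟨i, j⟩
  fin_cases i <;> simp

theorem rowSwap_unipotentDerivation (P : MatPoly) :
    rowSwap (unipotentDerivation P) = unipotentDerivation (rowSwap P) :=
  map_unipotentDerivation rowSwap unipotentDerivation (by simp) (by simp) (by simp) (by simp) P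

theorem rowSwap_genDet : rowSwap genDet = -genDet := by
  simp only [genDet, map_sub, map_mul, rowSwap_X, Equiv.swap_apply_left, Equiv.swap_apply_right]
  ring

noncomputable def invariantsRowSwap : InvariantsPoly →ₐ[ℂ] InvariantsPoly := aeval ![X 1, X 0, -X 2]

theorem rowSwap_invariantsHom (Q : InvariantsPoly) :
    rowSwap (invariantsHom Q) = invariantsHom (invariantsRowSwap Q) := by
  change (rowSwap.comp invariantsHom) Q = (invariantsHom.comp invariantsRowSwap) Q
  congr 1
  apply MvPolynomial.algHom_ext
  intro i
  fin_cases i <;> simp [invariantsRowSwap, rowSwap_genDet]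

theorem exists_X10_pow_mul_mem_range_invariantsHom {P : MatPoly}
    (hP : unipotentDerivation P = 0) : ∃ n : ℕ, X (1, 0) ^ n * P ∈ Set.range invariantsHom := by
  obtain ⟨n, Q, hQ⟩ := exists_X00_pow_mul_mem_range_invariantsHom
    (P := rowSwap P) (by rw [← rowSwap_unipotentDerivation, hP, map_zero])
  refine ⟨n, invariantsRowSwap Q, ?_⟩
  simpa [rowSwap_rowSwap, rowSwap_invariantsHom] using congrArg rowSwap hQ

theorem mem_range_invariantsHom_of_unipotentDerivation_eq_zero {P : MatPoly}
    (hP : unipotentDerivation P = 0) : P ∈ Set.range invariantsHom := by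
  obtain ⟨m, hm⟩ := exists_X00_pow_mul_mem_range_invariantsHom hP
  obtain ⟨n, hn⟩ := exists_X10_pow_mul_mem_range_invariantsHom hP
  rw [← invariantsHom_X_zero] at hm
  rw [← invariantsHom_X_one] at hn
  exact mem_range_of_pow_mul_mem_range_of_not_dvd invariantsHom_injective (X_prime (i := 0))
    (q := X 1) (by simp [X_dvd_X]) hm hn

end GL2

open GL2 in
theorem kernel_of_unipotent_derivation_on_GL2
    (δ : Derivation ℂ (Localization.Away genDet) (Localization.Away genDet))
    (h00 : δ (algebraMap (MvPolynomial (Fin 2 × Fin 2) ℂ) (Localization.Away genDet) (X (0, 0))) = 0)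
    (h10 : δ (algebraMap (MvPolynomial (Fin 2 × Fin 2) ℂ) (Localization.Away genDet) (X (1, 0))) = 0)
    (h01 : δ (algebraMap (MvPolynomial (Fin 2 × Fin 2) ℂ) (Localization.Away genDet) (X (0, 1)))
      = -(algebraMap (MvPolynomial (Fin 2 × Fin 2) ℂ) (Localization.Away genDet) (X (0, 0))))
    (h11 : δ (algebraMap (MvPolynomial (Fin 2 × Fin 2) ℂ) (Localization.Away genDet) (X (1, 1)))
      = -(algebraMap (MvPolynomial (Fin 2 × Fin 2) ℂ) (Localization.Away genDet) (X (1, 0)))) :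
    ∀ x : Localization.Away genDet,
      δ x = 0 ↔ x ∈ Algebra.adjoin ℂ
        ({algebraMap (MvPolynomial (Fin 2 × Fin 2) ℂ) (Localization.Away genDet) (X (0, 0)),
          algebraMap (MvPolynomial (Fin 2 × Fin 2) ℂ) (Localization.Away genDet) (X (1, 0)),
          algebraMap (MvPolynomial (Fin 2 × Fin 2) ℂ) (Localization.Away genDet) genDet,
          IsLocalization.Away.invSelf genDet} : Set (Localization.Away genDet)) := by
  intro x
  have hcomm (P : MatPoly) : algebraMap MatPoly (Localization.Away genDet) (unipotentDerivation P)
      = δ (algebraMap MatPoly _ P) :=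
    map_unipotentDerivation (IsScalarTower.toAlgHom ℂ _ _) δ h00 h10 h01 h11 P
  have hdet : δ (algebraMap MatPoly _ genDet) = 0 := by
    rw [← hcomm, unipotentDerivation_genDet, map_zero]
  have hinv : δ (IsLocalization.Away.invSelf genDet) = 0 := by
    rw [δ.leibniz_of_mul_eq_one ((mul_comm _ _).trans (IsLocalization.Away.mul_invSelf genDet)),
      hdet, smul_zero]
  refine ⟨fun hx => ?_, fun hx => ?_⟩
  · obtain ⟨n, P, hP⟩ := IsLocalization.Away.surj genDet x
    have hPker : unipotentDerivation P = 0 := by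
      apply IsLocalization.injective (Localization.Away genDet)
        (powers_le_nonZeroDivisors_of_noZeroDivisors genDet_ne_zero)
      rw [hcomm, ← hP, Derivation.leibniz, Derivation.leibniz_pow, hx, hdet]
      simp
    obtain ⟨Q, rfl⟩ := mem_range_invariantsHom_of_unipotentDerivation_eq_zero hPker
    rw [IsLocalization.Away.eq_algebraMap_mul_invSelf_pow genDet hP]
    refine mul_mem (Algebra.adjoin_mono ?_ (map_invariantsHom_mem_adjoin
      (IsScalarTower.toAlgHom ℂ MatPoly (Localization.Away genDet)) Q))
      (pow_mem (Algebra.subset_adjoin (by simp)) n)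
    exact Set.insert_subset_insert (Set.insert_subset_insert
      (Set.singleton_subset_iff.2 (Set.mem_insert _ _)))
  · refine Derivation.eqOn_adjoin (D2 := 0) ?_ hx
    rintro _ (rfl | rfl | rfl | rfl)
    exacts [h00, h10, hdet, hinv]
end

section
/- In the braid group Br_n on n strands, presented with generators σ₁, …, σ_{n−1} and the Artin relations σᵢσᵢ₊₁σᵢ = σᵢ₊₁σᵢσᵢ₊₁ (1 ≤ i ≤ n−2) and σᵢσⱼ = σⱼσᵢ (|i−j| > 1), the Jucys–Murphy elements δᵢ := σᵢ σᵢ₊₁ ⋯ σ_{n−2} σ_{n−1}² σ_{n−2} ⋯ σᵢ₊₁ σᵢ (for 1 ≤ i ≤ n−1) pairwise commute: δᵢ δⱼ = δⱼ δᵢ for all 1 ≤ i, j ≤ n−1. -/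
/-!
Unfolding one layer gives `δᵢ = σᵢ δᵢ₊₁ σᵢ`. By downward induction on `i`, `δᵢ` commutes with
every `σₖ` with `k > i`: for `k > i + 1` this is far commutativity together with the induction
hypothesis, and for `k = i + 1` it follows from the braid relation between `σᵢ` and `σᵢ₊₁`,
because `σᵢ` commutes with `δᵢ₊₂`. Since `δⱼ` is a word in the `σₖ` with `k ≥ j`, `δᵢ` commutes
with `δⱼ` whenever `i < j`.
-/

def braidRels (n : ℕ) : Set (FreeGroup (Fin (n - 1))) :=
  {r | (∃ i j : Fin (n - 1), (i : ℕ) + 1 = (j : ℕ) ∧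
          r = FreeGroup.of i * FreeGroup.of j * FreeGroup.of i *
              (FreeGroup.of j * FreeGroup.of i * FreeGroup.of j)⁻¹) ∨
       (∃ i j : Fin (n - 1), (i : ℕ) + 1 < (j : ℕ) ∧
          r = FreeGroup.of i * FreeGroup.of j * (FreeGroup.of j * FreeGroup.of i)⁻¹)}

abbrev BraidGroup (n : ℕ) : Type := PresentedGroup (braidRels n)

def braidGen (n k : ℕ) : BraidGroup n :=
  if h : k < n - 1 then PresentedGroup.of (⟨k, h⟩ : Fin (n - 1)) else 1

def jm (n i : ℕ) : BraidGroup n :=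
  ((List.range' i (n - 1 - i)).map (braidGen n)).prod *
    ((List.range' i (n - 1 - i)).reverse.map (braidGen n)).prod

theorem commute_conj_of_braid {M : Type*} [Monoid M] {a b x : M}
    (hab : a * b * a = b * a * b) (hax : Commute a x) :
    Commute b (a * (b * x * b) * a) :=
  calc b * (a * (b * x * b) * a)
      = (b * a * b) * x * (b * a) := by simp only [mul_assoc]
    _ = (a * b) * (a * x) * (b * a) := by rw [← hab]; simp only [mul_assoc]
    _ = (a * b * x) * (a * b * a) := by rw [hax.eq]; simp only [mul_assoc]
    _ = (a * (b * x * b) * a) * b := by rw [hab]; simp only [mul_assoc]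

namespace BraidGroup

variable {n : ℕ}

theorem braidGen_eq_one {k : ℕ} (h : n - 1 ≤ k) : braidGen n k = 1 := by
  simp [braidGen, Nat.not_lt.mpr h]

theorem braidGen_braid {k : ℕ} (h : k + 1 < n - 1) :
    braidGen n k * braidGen n (k + 1) * braidGen n k
      = braidGen n (k + 1) * braidGen n k * braidGen n (k + 1) := by
  have hk : k < n - 1 := by omega
  simp only [braidGen, dif_pos h, dif_pos hk, PresentedGroup.of, ← map_mul]
  exact PresentedGroup.mk_eq_mk_of_mul_inv_mem (Or.inl ⟨_, _, rfl, rfl⟩)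

theorem commute_braidGen_of_succ_lt {k l : ℕ} (h : k + 1 < l) :
    Commute (braidGen n k) (braidGen n l) := by
  by_cases hl : l < n - 1
  · have hk : k < n - 1 := by omega
    simp only [Commute, SemiconjBy, braidGen, dif_pos hl, dif_pos hk, PresentedGroup.of,
      ← map_mul]
    exact PresentedGroup.mk_eq_mk_of_mul_inv_mem (Or.inr ⟨_, _, h, rfl⟩)
  · rw [braidGen_eq_one (k := l) (by omega)]
    exact Commute.one_right _

theorem jm_eq_one {i : ℕ} (h : n - 1 ≤ i) : jm n i = 1 := by
  simp [jm, Nat.sub_eq_zero_of_le h]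

theorem jm_eq_braidGen_mul_jm_succ_mul (i : ℕ) :
    jm n i = braidGen n i * jm n (i + 1) * braidGen n i := by
  by_cases hi : i < n - 1
  · have hlen : n - 1 - i = n - 1 - (i + 1) + 1 := by omega
    simp [jm, hlen, List.range'_succ, List.prod_append, mul_assoc]
  · rw [jm_eq_one (by omega), jm_eq_one (by omega), braidGen_eq_one (by omega), mul_one, one_mul]

theorem commute_jm_of_forall {x : BraidGroup n} {m : ℕ}
    (h : ∀ l, m ≤ l → Commute x (braidGen n l)) : Commute x (jm n m) := by
  refine (Commute.list_prod_right _ _ ?_).mul_right (Commute.list_prod_right _ _ ?_) <;>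
  · simp only [List.mem_map, List.mem_reverse, List.mem_range'_1]
    rintro _ ⟨l, hl, rfl⟩
    exact h l hl.1

theorem commute_braidGen_jm {k i : ℕ} (h : i < k) : Commute (braidGen n k) (jm n i) := by
  if hi : i < n - 1 then
    rw [jm_eq_braidGen_mul_jm_succ_mul i]
    rcases (Nat.succ_le_of_lt h).eq_or_lt with rfl | hk
    · by_cases hi' : i + 1 < n - 1
      · rw [jm_eq_braidGen_mul_jm_succ_mul (i + 1)]
        exact commute_conj_of_braid (braidGen_braid hi')
          (commute_jm_of_forall fun l hl => commute_braidGen_of_succ_lt (by omega))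
      · rw [braidGen_eq_one (k := i + 1) (by omega)]
        exact Commute.one_left _
    · have hki : Commute (braidGen n k) (braidGen n i) := (commute_braidGen_of_succ_lt hk).symm
      exact (hki.mul_right (commute_braidGen_jm hk)).mul_right hki
  else
    rw [jm_eq_one (by omega)]
    exact Commute.one_right _
termination_by n - 1 - i

theorem commute_jm_of_lt {i j : ℕ} (h : i < j) : Commute (jm n i) (jm n j) :=
  commute_jm_of_forall fun _ hl => (commute_braidGen_jm (by omega)).symm

end BraidGroup

theorem jucys_murphy_elements_commute_general (n i j : ℕ) :
    jm n i * jm n j = jm n j * jm n i := by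
  rcases lt_trichotomy i j with h | rfl | h
  · exact (BraidGroup.commute_jm_of_lt h).eq
  · rfl
  · exact (BraidGroup.commute_jm_of_lt h).symm.eq

theorem jucys_murphy_elements_commute (n i j : ℕ) (hi : i < n - 1) (hj : j < n - 1) :
    jm n i * jm n j = jm n j * jm n i :=
  jucys_murphy_elements_commute_general n i j
end

section
/- In the braid group Br_n on n strands, presented with generators σ₁, …, σ_{n−1} and the Artin relations, the full twist equals the product of the Jucys–Murphy elements: (σ₁ σ₂ ⋯ σ_{n−1})ⁿ = δ₁ δ₂ ⋯ δ_{n−1}, where δᵢ := σᵢ σᵢ₊₁ ⋯ σ_{n−2} σ_{n−1}² σ_{n−2} ⋯ σᵢ₊₁ σᵢ. -/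
/-!
Write `A k = σ_k σ_{k+1} ⋯ σ_{n-2}`, so that the full twist is `A 0 ^ n` and `δ_k = A k ⋅ D k`
with `D k = σ_{n-2} ⋯ σ_{k+1} σ_k`. The braid relations say that conjugation by `A k` shifts
`σ_j ↦ σ_{j+1}` for `k ≤ j < n - 2`. Peeling `A k = σ_k ⋅ A (k+1)` off one factor at a time and
pushing the `σ_k`'s to the left through this shift gives `A k ^ (n-1-k) = D k ⋅ A (k+1) ^ (n-1-k)`,
hence `A k ^ (n-k) = δ_k ⋅ A (k+1) ^ (n-1-k)`, and induction on `k` downwards from `n - 1` yields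
`A 0 ^ n = δ_0 δ_1 ⋯ δ_{n-2}`.
-/

open List

variable {n : ℕ}

theorem braidGen_braid {i : ℕ} (h : i + 1 < n - 1) :
    braidGen n i * braidGen n (i + 1) * braidGen n i
      = braidGen n (i + 1) * braidGen n i * braidGen n (i + 1) := by
  have hi : i < n - 1 := by omega
  simp only [braidGen, dif_pos hi, dif_pos h, PresentedGroup.of, ← map_mul]
  exact PresentedGroup.mk_eq_mk_of_mul_inv_mem (Or.inl ⟨⟨i, hi⟩, ⟨i + 1, h⟩, rfl, rfl⟩)

theorem braidGen_commute {i j : ℕ} (h : i + 1 < j) : Commute (braidGen n i) (braidGen n j) := by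
  by_cases hj : j < n - 1
  · have hi : i < n - 1 := by omega
    simp only [Commute, SemiconjBy, braidGen, dif_pos hi, dif_pos hj, PresentedGroup.of,
      ← map_mul]
    exact PresentedGroup.mk_eq_mk_of_mul_inv_mem (Or.inr ⟨⟨i, hi⟩, ⟨j, hj⟩, h, rfl⟩)
  · simp only [braidGen, dif_neg hj]
    exact Commute.one_right _

def ascendingProd (n k : ℕ) : BraidGroup n :=
  ((range' k (n - 1 - k)).map (braidGen n)).prod

theorem ascendingProd_eq_braidGen_mul {k : ℕ} (hk : k < n - 1) :
    ascendingProd n k = braidGen n k * ascendingProd n (k + 1) := by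
  rw [ascendingProd, ascendingProd, show n - 1 - k = n - 1 - (k + 1) + 1 by omega, range'_succ,
    map_cons, prod_cons]

theorem ascendingProd_eq_one {k : ℕ} (hk : n - 1 ≤ k) : ascendingProd n k = 1 := by
  rw [ascendingProd, Nat.sub_eq_zero_of_le hk, range'_zero, map_nil, prod_nil]

theorem braidGen_commute_ascendingProd {i k : ℕ} (h : i + 1 < k) :
    Commute (braidGen n i) (ascendingProd n k) :=
  Commute.list_prod_right _ _ fun _ hj ↦ by
    obtain ⟨j, hj', rfl⟩ := mem_map.mp hj
    exact braidGen_commute (by rw [mem_range'_1] at hj'; omega)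

theorem ascendingProd_mul_braidGen {k j : ℕ} (hkj : k ≤ j) (hj : j + 1 < n - 1) :
    ascendingProd n k * braidGen n j = braidGen n (j + 1) * ascendingProd n k := by
  induction hkj using Nat.decreasingInduction with
  | self =>
    rw [ascendingProd_eq_braidGen_mul (by omega), ascendingProd_eq_braidGen_mul hj, mul_assoc,
      mul_assoc, (braidGen_commute_ascendingProd (show j + 1 < j + 1 + 1 by omega)).symm.eq]
    simp only [← mul_assoc, braidGen_braid hj]
  | of_succ k hkj ih =>
    rw [ascendingProd_eq_braidGen_mul (by omega), mul_assoc, ih,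
      ← mul_assoc, (braidGen_commute (show k + 1 < j + 1 by omega)).eq, mul_assoc]

theorem ascendingProd_mul_prod_map_braidGen {k : ℕ} {l : List ℕ}
    (hl : ∀ j ∈ l, k ≤ j ∧ j + 1 < n - 1) :
    ascendingProd n k * (l.map (braidGen n)).prod
      = (l.map fun j ↦ braidGen n (j + 1)).prod * ascendingProd n k := by
  induction l with
  | nil => simp
  | cons j l ih =>
    obtain ⟨hkj, hj⟩ := hl j mem_cons_self
    rw [map_cons, map_cons, prod_cons, prod_cons, ← mul_assoc, ascendingProd_mul_braidGen hkj hj,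
      mul_assoc, ih fun i hi ↦ hl i (mem_cons_of_mem j hi), mul_assoc]

theorem ascendingProd_pow {k s : ℕ} (hs : k + s ≤ n - 1) :
    ascendingProd n k ^ s
      = ((range' k s).reverse.map (braidGen n)).prod * ascendingProd n (k + 1) ^ s := by
  induction s with
  | zero => simp
  | succ s ih =>
    have hshift := ascendingProd_mul_prod_map_braidGen (n := n) (k := k)
      (l := (range' k s).reverse) fun j hj ↦ by rw [mem_reverse, mem_range'_1] at hj; omega
    rw [pow_succ', ih (by omega), ← mul_assoc, hshift, ascendingProd_eq_braidGen_mul (by omega)]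
    have hdesc : ((range' k (s + 1)).reverse.map (braidGen n)).prod
        = ((range' k s).reverse.map fun j ↦ braidGen n (j + 1)).prod * braidGen n k := by
      rw [range'_succ, reverse_cons, map_append, prod_append, map_singleton, prod_singleton,
        add_comm k, ← map_add_range', ← map_reverse, map_map]
      simp only [Function.comp_def, Nat.add_comm 1]
    rw [hdesc, pow_succ', mul_assoc, mul_assoc, mul_assoc]

theorem ascendingProd_pow_eq_prod_jm (k : ℕ) :
    ascendingProd n k ^ (n - k) = ((range' k (n - 1 - k)).map (jm n)).prod := by
  obtain hk | hk := le_or_gt (n - 1) k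
  · rw [ascendingProd_eq_one hk, one_pow, Nat.sub_eq_zero_of_le hk, range'_zero, map_nil,
      prod_nil]
  calc ascendingProd n k ^ (n - k)
      = ascendingProd n k * ascendingProd n k ^ (n - 1 - k) := by
        rw [← pow_succ']; congr 1; omega
    _ = jm n k * ascendingProd n (k + 1) ^ (n - (k + 1)) := by
        rw [ascendingProd_pow (by omega), ← mul_assoc, show n - (k + 1) = n - 1 - k by omega]
        rfl
    _ = ((range' k (n - 1 - k)).map (jm n)).prod := by
        rw [ascendingProd_pow_eq_prod_jm (k + 1), show n - 1 - k = n - 1 - (k + 1) + 1 by omega,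
          range'_succ, map_cons, prod_cons]
termination_by n - k

theorem full_twist_eq_product_of_jucys_murphy (n : ℕ) :
    (((List.range (n - 1)).map (braidGen n)).prod) ^ n
      = ((List.range (n - 1)).map (jm n)).prod := by
  simpa only [ascendingProd, Nat.sub_zero, range_eq_range'] using
    ascendingProd_pow_eq_prod_jm (n := n) 0
end

section
/- In the affine braid group Br_n^aff, presented with generators σ₁, …, σ_{n−1}, Δₙ and relations (a) σ_{n−1} Δₙ σ_{n−1} Δₙ = Δₙ σ_{n−1} Δₙ σ_{n−1}, (b) σᵢ Δₙ = Δₙ σᵢ for i < n−1, (c) σᵢσᵢ₊₁σᵢ = σᵢ₊₁σᵢσᵢ₊₁ for 1 ≤ i ≤ n−2, and (d) σᵢσⱼ = σⱼσᵢ for |i−j| > 1, the Bernstein–Lusztig elements Δᵢ := σᵢ ⋯ σ_{n−2} σ_{n−1} Δₙ σ_{n−1} σ_{n−2} ⋯ σᵢ (for 1 ≤ i ≤ n−1, together with Δₙ itself) pairwise commute: Δᵢ Δⱼ = Δⱼ Δᵢ for all 1 ≤ i, j ≤ n. -/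
/-- Free-group generator corresponding to `σᵢ` (0-indexed). -/
def affS (n : ℕ) (i : Fin (n - 1)) : FreeGroup (Fin (n - 1) ⊕ Unit) :=
  FreeGroup.of (Sum.inl i)

/-- Free-group generator corresponding to the flag-pole generator `Δₙ`. -/
def affD (n : ℕ) : FreeGroup (Fin (n - 1) ⊕ Unit) :=
  FreeGroup.of (Sum.inr ())

/-- The relations of the affine braid group on `n` strands, with `0`-indexed
generators `σ₀, …, σ_{n-2}` (the usual `σ₁, …, σ_{n-1}`) and `Δₙ`:
(a) `σ_{n-1} Δₙ σ_{n-1} Δₙ = Δₙ σ_{n-1} Δₙ σ_{n-1}`,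
(b) `σᵢ Δₙ = Δₙ σᵢ` for `i < n - 1`,
(c) `σᵢσᵢ₊₁σᵢ = σᵢ₊₁σᵢσᵢ₊₁`,
(d) `σᵢσⱼ = σⱼσᵢ` for `|i - j| > 1`. -/
def affineBraidRels (n : ℕ) : Set (FreeGroup (Fin (n - 1) ⊕ Unit)) :=
  {r | (∃ i j : Fin (n - 1), (i : ℕ) + 1 = (j : ℕ) ∧
          r = affS n i * affS n j * affS n i * (affS n j * affS n i * affS n j)⁻¹) ∨
       (∃ i j : Fin (n - 1), (i : ℕ) + 1 < (j : ℕ) ∧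
          r = affS n i * affS n j * (affS n j * affS n i)⁻¹) ∨
       (∃ i : Fin (n - 1), (i : ℕ) = n - 2 ∧
          r = affS n i * affD n * affS n i * affD n *
              (affD n * affS n i * affD n * affS n i)⁻¹) ∨
       (∃ i : Fin (n - 1), (i : ℕ) < n - 2 ∧
          r = affS n i * affD n * (affD n * affS n i)⁻¹)}

/-- The affine braid group on `n` strands as a presented group. -/
abbrev AffineBraidGroup (n : ℕ) : Type := PresentedGroup (affineBraidRels n)

/-- The generator `σ` (0-indexed); junk value `1` when `k ≥ n - 1`. -/
def affineBraidGen (n k : ℕ) : AffineBraidGroup n :=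
  if h : k < n - 1 then PresentedGroup.of (Sum.inl (⟨k, h⟩ : Fin (n - 1))) else 1

/-- The flag-pole generator `Δₙ` of the affine braid group. -/
def affineDelta (n : ℕ) : AffineBraidGroup n :=
  PresentedGroup.of (Sum.inr ())

/-- The Bernstein–Lusztig element `Δᵢ = σᵢ ⋯ σ_{n-2} σ_{n-1} Δₙ σ_{n-1} σ_{n-2} ⋯ σᵢ`
(0-indexed: `bl n i = σᵢ ⋯ σ_{n-2} ⋅ Δₙ ⋅ σ_{n-2} ⋯ σᵢ`; in particular `bl n (n-1) = Δₙ`). -/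
def bl (n i : ℕ) : AffineBraidGroup n :=
  ((List.range' i (n - 1 - i)).map (affineBraidGen n)).prod * affineDelta n *
    ((List.range' i (n - 1 - i)).reverse.map (affineBraidGen n)).prod

/-!
Since `Δᵢ = σᵢ Δᵢ₊₁ σᵢ`, one shows `Δᵢ Δⱼ = Δⱼ Δᵢ` for `i < j` by downward induction on `i`.
If `j > i + 1`, then `σᵢ` commutes with every letter of `Δⱼ`, and `Δᵢ₊₁` commutes with `Δⱼ` by
induction. If `j = i + 1 = n - 1`, the claim is relation (a). If `j = i + 1 < n - 1`, then with
`a = σᵢ`, `b = σᵢ₊₁`, `D = Δᵢ₊₂` the claim is that `a (bDb) a` commutes with `bDb`, which follows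
from the braid relation `aba = bab`, from `aD = Da` and from the induction hypothesis
`(bDb) D = D (bDb)`.
-/

theorem commute_sandwich_of_braid {G : Type*} [Group G] {a b D : G}
    (hab : a * b * a = b * a * b) (haD : Commute a D) (hbD : Commute (b * D * b) D) :
    Commute (a * (b * D * b) * a) (b * D * b) := by
  have hYX : a * (b * D * b) * a * (b * D * b) = b * a * (b * D * b * D) * a * b :=
    calc a * (b * D * b) * a * (b * D * b)
        = a * b * D * (b * a * b) * D * b := by group
      _ = a * b * (D * a) * b * (a * D) * b := by rw [← hab]; group
      _ = a * b * (a * D) * b * (D * a) * b := by rw [haD.eq]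
      _ = a * b * a * D * b * D * a * b := by group
      _ = b * a * (b * D * b * D) * a * b := by rw [hab]; group
  have hXY : b * D * b * (a * (b * D * b) * a) = b * a * (D * b * D * b) * a * b :=
    calc b * D * b * (a * (b * D * b) * a)
        = b * D * (b * a * b) * D * b * a := by group
      _ = b * (D * a) * b * (a * D) * b * a := by rw [← hab]; group
      _ = b * (a * D) * b * (D * a) * b * a := by rw [haD.eq]
      _ = b * a * D * b * D * (a * b * a) := by group
      _ = b * a * (D * b * D * b) * a * b := by rw [hab]; group
  have hbD' : b * D * b * D = D * b * D * b := by simpa only [mul_assoc] using hbD.eq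
  rw [Commute, SemiconjBy, hYX, hXY, hbD']

namespace AffineBraidGroup

variable {n : ℕ}

theorem affineBraidGen_of_lt {k : ℕ} (h : k < n - 1) :
    affineBraidGen n k = PresentedGroup.mk (affineBraidRels n) (affS n ⟨k, h⟩) := by
  simp [affineBraidGen, h, affS, PresentedGroup.of]

theorem affineBraidGen_braid {i : ℕ} (h : i + 1 < n - 1) :
    affineBraidGen n i * affineBraidGen n (i + 1) * affineBraidGen n i
      = affineBraidGen n (i + 1) * affineBraidGen n i * affineBraidGen n (i + 1) := by
  have hi : i < n - 1 := by omega
  simp only [affineBraidGen_of_lt hi, affineBraidGen_of_lt h, ← map_mul]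
  exact PresentedGroup.mk_eq_mk_of_mul_inv_mem (Or.inl ⟨⟨i, hi⟩, ⟨i + 1, h⟩, rfl, rfl⟩)

theorem commute_affineBraidGen_of_add_one_lt {i j : ℕ} (h : i + 1 < j) :
    Commute (affineBraidGen n i) (affineBraidGen n j) := by
  by_cases hj : j < n - 1
  · have hi : i < n - 1 := by omega
    simp only [Commute, SemiconjBy, affineBraidGen_of_lt hi, affineBraidGen_of_lt hj, ← map_mul]
    exact PresentedGroup.mk_eq_mk_of_mul_inv_mem (Or.inr (Or.inl ⟨⟨i, hi⟩, ⟨j, hj⟩, h, rfl⟩))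
  · simp [affineBraidGen, hj]

theorem commute_affineBraidGen_affineDelta {i : ℕ} (h : i < n - 2) :
    Commute (affineBraidGen n i) (affineDelta n) := by
  have hi : i < n - 1 := by omega
  simp only [Commute, SemiconjBy, affineBraidGen_of_lt hi, affineDelta, PresentedGroup.of,
    ← map_mul]
  exact PresentedGroup.mk_eq_mk_of_mul_inv_mem (Or.inr (Or.inr (Or.inr ⟨⟨i, hi⟩, h, rfl⟩)))

theorem affineDelta_braid (h : 2 ≤ n) :
    affineBraidGen n (n - 2) * affineDelta n * affineBraidGen n (n - 2) * affineDelta n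
      = affineDelta n * affineBraidGen n (n - 2) * affineDelta n * affineBraidGen n (n - 2) := by
  have hi : n - 2 < n - 1 := by omega
  simp only [affineBraidGen_of_lt hi, affineDelta, PresentedGroup.of, ← map_mul]
  exact PresentedGroup.mk_eq_mk_of_mul_inv_mem (Or.inr (Or.inr (Or.inl ⟨⟨n - 2, hi⟩, rfl, rfl⟩)))

theorem bl_of_le {i : ℕ} (h : n - 1 ≤ i) : bl n i = affineDelta n := by
  simp [bl, Nat.sub_eq_zero_of_le h]

theorem bl_of_lt {i : ℕ} (h : i < n - 1) :
    bl n i = affineBraidGen n i * bl n (i + 1) * affineBraidGen n i := by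
  rw [bl, bl, show n - 1 - i = n - 1 - (i + 1) + 1 by omega, List.range'_succ]
  simp only [List.map_cons, List.prod_cons, List.reverse_cons, List.map_append,
    List.prod_append, List.map_nil, List.prod_nil]
  group

theorem commute_affineBraidGen_bl {k j : ℕ} (hk : k < n - 2) (hkj : k + 1 < j) :
    Commute (affineBraidGen n k) (bl n j) := by
  rcases lt_or_ge j (n - 1) with hj | hj
  · rw [bl_of_lt hj]
    have hσ := commute_affineBraidGen_of_add_one_lt (n := n) hkj
    exact (hσ.mul_right (commute_affineBraidGen_bl hk (by omega))).mul_right hσ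
  · rw [bl_of_le hj]
    exact commute_affineBraidGen_affineDelta hk
termination_by n - 1 - j

theorem commute_bl_of_le {i j : ℕ} (hij : i ≤ j) (hj : j ≤ n - 1) :
    Commute (bl n i) (bl n j) := by
  rcases le_or_gt (n - 1) i with hi | hi
  · rw [bl_of_le hi, bl_of_le (hi.trans hij)]
  rcases hij.eq_or_lt with rfl | hij
  · exact Commute.refl _
  rcases lt_or_ge (i + 1) j with hnonadj | hadj
  · have hσ := commute_affineBraidGen_bl (n := n) (by omega) hnonadj
    rw [bl_of_lt hi]
    exact (hσ.mul_left (commute_bl_of_le (by omega : i + 1 ≤ j) hj)).mul_left hσ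
  obtain rfl : j = i + 1 := by omega
  rw [bl_of_lt hi]
  rcases lt_or_ge (i + 1) (n - 1) with hbelow | htop
  · have hD : Commute (bl n (i + 1)) (bl n (i + 2)) := commute_bl_of_le (by omega) (by omega)
    rw [bl_of_lt hbelow] at hD ⊢
    exact commute_sandwich_of_braid (affineBraidGen_braid hbelow)
      (commute_affineBraidGen_bl (by omega) (by omega)) hD
  · obtain rfl : i = n - 2 := by omega
    rw [bl_of_le htop]
    simpa only [Commute, SemiconjBy, mul_assoc] using affineDelta_braid (by omega)
termination_by n - 1 - i

end AffineBraidGroup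

theorem bernstein_lusztig_elements_commute (n i j : ℕ) (hi : i < n) (hj : j < n) :
    bl n i * bl n j = bl n j * bl n i := by
  rcases le_total i j with h | h
  · exact (AffineBraidGroup.commute_bl_of_le h (by omega)).eq
  · exact (AffineBraidGroup.commute_bl_of_le h (by omega)).symm.eq
end
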